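/- The ℂ-span of the ranges of the sixteen projectors Π₁,…,Π₁₆ (equivalently, the span of the union of the column spaces of the Π_k) equals the subspace {w : (Fin 3 → Fin 2) → ℂ | ∑_f conj(GHZ'₃ f) · w f = 0}, the orthogonal complement of the line spanned by GHZ'₃; in particular this span has ℂ-dimension exactly 7. (Contextuality concentration: the quantum maximum of μ₃ exploits only a 7-dimensional Hilbert space, one less than the 8-dimensional three-qubit space.) -/

import Mathlib

open Matrix BigOperators

noncomputable section

/-- Pauli X matrix. -/
def pauliX : Matrix (Fin 2) (Fin 2) ℂ := !![0, 1; 1, 0]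

/-- Pauli Y matrix. -/
def pauliY : Matrix (Fin 2) (Fin 2) ℂ := !![0, -Complex.I; Complex.I, 0]

/-- n-fold tensor (Kronecker) product of a family of 2×2 matrices,
defined entrywise by `T(A) f g = ∏ j, (A j) (f j) (g j)`. -/
def tensor {n : ℕ} (A : Fin n → Matrix (Fin 2) (Fin 2) ℂ) :
    Matrix (Fin n → Fin 2) (Fin n → Fin 2) ℂ :=
  Matrix.of fun f g => ∏ j, A j (f j) (g j)

/-- The n-partite MABK operator
`M_n = (1/(2i)) (⊗ⱼ (X + iY) − ⊗ⱼ (X − iY))`. -/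
def MABK (n : ℕ) : Matrix (Fin n → Fin 2) (Fin n → Fin 2) ℂ :=
  (1 / (2 * Complex.I)) •
    (tensor (fun _ : Fin n => pauliX + Complex.I • pauliY)
      - tensor (fun _ : Fin n => pauliX - Complex.I • pauliY))

/-- The n-qubit GHZ state `(|0…0⟩ + i|1…1⟩)/√2`. -/
def GHZ (n : ℕ) : (Fin n → Fin 2) → ℂ :=
  fun f =>
    if f = fun _ => 0 then 1 / (Real.sqrt 2 : ℂ)
    else if f = fun _ => 1 then Complex.I / (Real.sqrt 2 : ℂ)
    else 0

/-- The phase-flipped n-qubit GHZ state `(|0…0⟩ − i|1…1⟩)/√2`. -/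
def GHZ' (n : ℕ) : (Fin n → Fin 2) → ℂ :=
  fun f =>
    if f = fun _ => 0 then 1 / (Real.sqrt 2 : ℂ)
    else if f = fun _ => 1 then -Complex.I / (Real.sqrt 2 : ℂ)
    else 0

/-- Projector onto the +1 eigenstate of Pauli X. -/
def Ppx : Matrix (Fin 2) (Fin 2) ℂ := (1 / 2 : ℂ) • (1 + pauliX)

/-- Projector onto the −1 eigenstate of Pauli X. -/
def Pmx : Matrix (Fin 2) (Fin 2) ℂ := (1 / 2 : ℂ) • (1 - pauliX)

/-- Projector onto the +1 eigenstate of Pauli Y. -/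
def Ppy : Matrix (Fin 2) (Fin 2) ℂ := (1 / 2 : ℂ) • (1 + pauliY)

/-- Projector onto the −1 eigenstate of Pauli Y. -/
def Pmy : Matrix (Fin 2) (Fin 2) ℂ := (1 / 2 : ℂ) • (1 - pauliY)

/-- The sixteen rank-one projectors Π₁,…,Π₁₆ of the contextuality witness μ₃
(indexed by `Fin 16`, so `Proj3 k` is Π_{k+1}). -/
def Proj3 : Fin 16 → Matrix (Fin 3 → Fin 2) (Fin 3 → Fin 2) ℂ :=
  ![tensor ![Pmy, Ppy, Ppy], tensor ![Pmy, Pmy, Pmy],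
    tensor ![Ppy, Ppy, Pmy], tensor ![Ppy, Pmy, Ppy],
    tensor ![Ppy, Ppx, Ppx], tensor ![Ppy, Pmx, Pmx],
    tensor ![Pmy, Ppx, Pmx], tensor ![Pmy, Pmx, Ppx],
    tensor ![Pmx, Ppy, Pmx], tensor ![Pmx, Pmy, Ppx],
    tensor ![Ppx, Ppy, Ppx], tensor ![Ppx, Pmy, Pmx],
    tensor ![Ppx, Ppx, Ppy], tensor ![Ppx, Pmx, Pmy],
    tensor ![Pmx, Ppx, Pmy], tensor ![Pmx, Pmx, Ppy]]


/-!
Each `Π_k` is a tensor product of the qubit projectors `|v⟩⟨v| / 2` with `v = (1, λ)` and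
`λ ∈ {±1, ±i}`, so its range is the line through the product vector `ψ_k = ⊗ⱼ (1, λ_{kj})`.
The sixteen phase triples all have product `i`, which says `ψ_k(111) = i ψ_k(000)`, i.e.
`ψ_k ⟂ GHZ'₃`. Conversely `GHZ'₃^⊥ = {w | w(111) = i w(000)}` is spanned by `e₀₀₀ + i e₁₁₁`
and the six remaining basis vectors, each an explicit combination of the `ψ_k`.
-/

open Complex

section Qubits

variable {n : ℕ}

def tensorVec (u : Fin n → Fin 2 → ℂ) : (Fin n → Fin 2) → ℂ :=
  fun f => ∏ j, u j (f j)

theorem tensor_vecMulVec (u w : Fin n → Fin 2 → ℂ) :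
    tensor (fun j => vecMulVec (u j) (w j)) = vecMulVec (tensorVec u) (tensorVec w) := by
  ext f g
  simp [tensor, tensorVec, vecMulVec_apply, Finset.prod_mul_distrib]

theorem range_mulVec_vecMulVec {K m l : Type*} [Field K] [Fintype l] [DecidableEq l]
    {u : m → K} {w : l → K} (hw : w ≠ 0) :
    Set.range (vecMulVec u w).mulVec = (K ∙ u : Submodule K (m → K)) := by
  obtain ⟨i, hi⟩ := Function.ne_iff.mp hw
  rw [Submodule.span_singleton_eq_range]
  ext v
  simp only [Set.mem_range, vecMulVec_mulVec, op_smul_eq_smul]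
  constructor
  · rintro ⟨x, rfl⟩
    exact ⟨_, rfl⟩
  · rintro ⟨c, rfl⟩
    exact ⟨Pi.single i (c / w i), by rw [dotProduct_single, mul_div_cancel₀ _ hi]⟩

def qubitProj (c : ℂ) : Matrix (Fin 2) (Fin 2) ℂ :=
  vecMulVec ![1, c] ![1 / 2, star c / 2]

theorem Ppx_eq_qubitProj : Ppx = qubitProj 1 := by
  ext i j
  fin_cases i <;> fin_cases j <;>
    simp [Ppx, pauliX, qubitProj, vecMulVec_apply, div_eq_mul_inv, mul_comm]

theorem Pmx_eq_qubitProj : Pmx = qubitProj (-1) := by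
  ext i j
  fin_cases i <;> fin_cases j <;>
    simp [Pmx, pauliX, qubitProj, vecMulVec_apply, div_eq_mul_inv, mul_comm]

theorem Ppy_eq_qubitProj : Ppy = qubitProj I := by
  ext i j
  fin_cases i <;> fin_cases j <;>
    simp [Ppy, pauliY, qubitProj, vecMulVec_apply, div_eq_mul_inv, mul_comm]
  linear_combination (1 / 2 : ℂ) * I_mul_I

theorem Pmy_eq_qubitProj : Pmy = qubitProj (-I) := by
  ext i j
  fin_cases i <;> fin_cases j <;>
    simp [Pmy, pauliY, qubitProj, vecMulVec_apply, div_eq_mul_inv, mul_comm]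
  linear_combination (1 / 2 : ℂ) * I_mul_I

def productState (c : Fin n → ℂ) : (Fin n → Fin 2) → ℂ :=
  tensorVec fun j => ![1, c j]

@[simp]
theorem productState_apply_zero (c : Fin n → ℂ) : productState c 0 = 1 := by
  simp [productState, tensorVec]

@[simp]
theorem productState_apply_one (c : Fin n → ℂ) : productState c 1 = ∏ j, c j := by
  simp [productState, tensorVec]

theorem span_range_mulVec_tensor_qubitProj (c : Fin n → ℂ) :
    Submodule.span ℂ (Set.range (tensor fun j => qubitProj (c j)).mulVec) =
      ℂ ∙ productState c := by
  have hbra : tensorVec (fun j => ![1 / 2, star (c j) / 2]) ≠ 0 :=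
    Function.ne_iff.mpr ⟨0, by simp [tensorVec]⟩
  simp_rw [qubitProj]
  rw [tensor_vecMulVec, range_mulVec_vecMulVec hbra, Submodule.span_eq]
  rfl

theorem span_iUnion_range_mulVec_tensor_qubitProj {ι : Type*} (c : ι → Fin n → ℂ) :
    Submodule.span ℂ (⋃ k, Set.range (tensor fun j => qubitProj (c k j)).mulVec) =
      Submodule.span ℂ (Set.range fun k => productState (c k)) := by
  simp_rw [Submodule.span_iUnion, span_range_mulVec_tensor_qubitProj,
    Submodule.span_range_eq_iSup]

theorem zero_ne_one_fun_fin_two (hn : n ≠ 0) : (0 : Fin n → Fin 2) ≠ 1 := fun h => by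
  simpa using congrFun h ⟨0, Nat.pos_of_ne_zero hn⟩

theorem GHZ'_eq_single_add_single (hn : n ≠ 0) :
    GHZ' n = Pi.single 0 (1 / (√2 : ℂ)) + Pi.single 1 (-I / (√2 : ℂ)) := by
  have h01 := zero_ne_one_fun_fin_two hn
  funext f
  simp only [GHZ', ← Pi.zero_def, ← Pi.one_def, Pi.add_apply, Pi.single_apply]
  by_cases hf0 : f = 0
  · simp [hf0, h01]
  by_cases hf1 : f = 1
  · simp [hf1, h01.symm]
  · simp [hf0, hf1]

theorem star_GHZ'_dotProduct (hn : n ≠ 0) (w : (Fin n → Fin 2) → ℂ) :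
    star (GHZ' n) ⬝ᵥ w = (w 0 + I * w 1) / √2 := by
  simp [GHZ'_eq_single_add_single hn, Pi.star_single, add_dotProduct, single_dotProduct]
  ring

theorem star_GHZ'_dotProduct_eq_zero_iff (hn : n ≠ 0) (w : (Fin n → Fin 2) → ℂ) :
    star (GHZ' n) ⬝ᵥ w = 0 ↔ w 1 = I * w 0 := by
  rw [star_GHZ'_dotProduct hn, div_eq_zero_iff, or_iff_left (by simp)]
  constructor <;> intro h
  · linear_combination -I * h + w 1 * I_mul_I
  · linear_combination I * h + w 0 * I_mul_I

def ghz'Perp (n : ℕ) : Submodule ℂ ((Fin n → Fin 2) → ℂ) :=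
  LinearMap.ker (dotProductBilin ℂ ℂ (star (GHZ' n)))

theorem mem_ghz'Perp {w : (Fin n → Fin 2) → ℂ} : w ∈ ghz'Perp n ↔ star (GHZ' n) ⬝ᵥ w = 0 :=
  Iff.rfl

theorem finrank_ghz'Perp_add_one (hn : n ≠ 0) :
    Module.finrank ℂ (ghz'Perp n) + 1 = 2 ^ n := by
  have hne : dotProductBilin ℂ ℂ (star (GHZ' n)) ≠ 0 := fun h => by
    have := congrArg (· (Pi.single 0 1)) h
    simp [star_GHZ'_dotProduct hn, zero_ne_one_fun_fin_two hn] at this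
  rw [ghz'Perp, Module.Dual.finrank_ker_add_one_of_ne_zero hne,
    Module.finrank_fintype_fun_eq_card, Fintype.card_fun, Fintype.card_fin, Fintype.card_fin]

theorem ghz'Perp_le (hn : n ≠ 0) {S : Submodule ℂ ((Fin n → Fin 2) → ℂ)}
    (hu : Pi.single 0 1 + I • Pi.single 1 1 ∈ S)
    (he : ∀ g, g ≠ 0 → g ≠ 1 → Pi.single g 1 ∈ S) : ghz'Perp n ≤ S := by
  intro w hw
  rw [mem_ghz'Perp, star_GHZ'_dotProduct_eq_zero_iff hn] at hw
  have h01 := zero_ne_one_fun_fin_two hn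
  have hdecomp : w = w 0 • (Pi.single 0 1 + I • Pi.single 1 1) +
      ∑ g ∈ ({0, 1} : Finset _)ᶜ, w g • Pi.single g 1 := by
    funext f
    simp only [Pi.add_apply, Pi.smul_apply, Finset.sum_apply, Pi.single_apply, smul_eq_mul,
      mul_ite, mul_one, mul_zero]
    by_cases hf0 : f = 0
    · simp [hf0, h01]
    by_cases hf1 : f = 1
    · simp [hf1, h01.symm, hw, mul_comm]
    · simp [hf0, hf1]
  rw [hdecomp]
  refine add_mem (S.smul_mem _ hu) (S.sum_mem fun g hg => ?_)
  obtain ⟨hg0, hg1⟩ : g ≠ 0 ∧ g ≠ 1 := by simpa [not_or] using hg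
  exact S.smul_mem _ (he g hg0 hg1)

end Qubits

theorem funext_fin_three {α β : Type*} {v w : (Fin 3 → β) → α}
    (h : ∀ a b c, v ![a, b, c] = w ![a, b, c]) : v = w := by
  funext f
  have hf : f = ![f 0, f 1, f 2] := by funext i; fin_cases i <;> rfl
  rw [hf]
  exact h _ _ _

/-- Row `k` lists the phases of `Π_{k+1} = ⊗ⱼ qubitProj λⱼ`: `±x ↦ ±1` and `±y ↦ ±i`. -/
def phase : Fin 16 → Fin 3 → ℂ :=
  ![![-I, I, I], ![-I, -I, -I], ![I, I, -I], ![I, -I, I],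
    ![I, 1, 1], ![I, -1, -1], ![-I, 1, -1], ![-I, -1, 1],
    ![-1, I, -1], ![-1, -I, 1], ![1, I, 1], ![1, -I, -1],
    ![1, 1, I], ![1, -1, -I], ![-1, 1, -I], ![-1, -1, I]]

theorem Proj3_eq_tensor_qubitProj (k : Fin 16) :
    Proj3 k = tensor fun j => qubitProj (phase k j) := by
  simp only [Proj3, Ppx_eq_qubitProj, Pmx_eq_qubitProj, Ppy_eq_qubitProj, Pmy_eq_qubitProj]
  fin_cases k <;> rfl

theorem prod_phase (k : Fin 16) : ∏ j, phase k j = I := by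
  fin_cases k <;> simp [phase, Fin.prod_univ_three]

def phaseState (k : Fin 16) : (Fin 3 → Fin 2) → ℂ :=
  productState (phase k)

theorem phaseState_apply (k : Fin 16) (a b c : Fin 2) :
    phaseState k ![a, b, c] = ![1, phase k 0] a * ![1, phase k 1] b * ![1, phase k 2] c := by
  simp [phaseState, productState, tensorVec, Fin.prod_univ_three]

theorem span_range_phaseState_le_ghz'Perp :
    Submodule.span ℂ (Set.range phaseState) ≤ ghz'Perp 3 := by
  rw [Submodule.span_le]
  rintro _ ⟨k, rfl⟩
  rw [SetLike.mem_coe, mem_ghz'Perp, star_GHZ'_dotProduct_eq_zero_iff three_ne_zero]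
  simp [phaseState, prod_phase]

theorem mem_span_range_phaseState_of_sum {v : (Fin 3 → Fin 2) → ℂ} (c : Fin 16 → ℂ)
    (hc : ∀ a b d, ∑ k, c k * phaseState k ![a, b, d] = v ![a, b, d]) :
    v ∈ Submodule.span ℂ (Set.range phaseState) :=
  (Submodule.mem_span_range_iff_exists_fun ℂ).2
    ⟨c, funext_fin_three fun a b d => by simpa [Finset.sum_apply] using hc a b d⟩

set_option maxHeartbeats 1000000 in
theorem ghz'Perp_le_span_range_phaseState :
    ghz'Perp 3 ≤ Submodule.span ℂ (Set.range phaseState) := by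
  set S := Submodule.span ℂ (Set.range phaseState)
  obtain ⟨hu, h001, h010, h011, h100, h101, h110⟩ :
      Pi.single 0 1 + I • Pi.single 1 1 ∈ S ∧
      Pi.single ![0, 0, 1] 1 ∈ S ∧ Pi.single ![0, 1, 0] 1 ∈ S ∧ Pi.single ![0, 1, 1] 1 ∈ S ∧
      Pi.single ![1, 0, 0] 1 ∈ S ∧ Pi.single ![1, 0, 1] 1 ∈ S ∧ Pi.single ![1, 1, 0] 1 ∈ S := by
    refine ⟨mem_span_range_phaseState_of_sum
        ![1/4, 1/4, 1/4, 1/4, 0, 0, 0, 0, 0, 0, 0, 0, 0, 0, 0, 0] ?_,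
      mem_span_range_phaseState_of_sum ![(1 - I)/8, (1 + I)/8, (-1 + I)/8, (-1 - I)/8,
        1/4, 0, -1/4, 0, 0, 0, 0, 0, 0, 0, 0, 0] ?_,
      mem_span_range_phaseState_of_sum ![(-1 - I)/8, (-1 + I)/8, (-1 - I)/8, (-1 + I)/8,
        1/4, 0, 1/4, 0, 0, 0, 0, 0, 0, 0, 0, 0] ?_,
      mem_span_range_phaseState_of_sum ![(-1 - I)/8, (-1 - I)/8, (1 - I)/8, (1 - I)/8,
        0, 0, 0, 0, I/4, I/4, 0, 0, 0, 0, 0, 0] ?_,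
      mem_span_range_phaseState_of_sum ![(1 + I)/8, (1 + I)/8, (1 - I)/8, (1 - I)/8,
        0, 0, 0, 0, -1/4, -1/4, 0, 0, 0, 0, 0, 0] ?_,
      mem_span_range_phaseState_of_sum ![(1 + I)/8, (-1 + I)/8, (1 + I)/8, (-1 + I)/8,
        -I/4, 0, -I/4, 0, 0, 0, 0, 0, 0, 0, 0, 0] ?_,
      mem_span_range_phaseState_of_sum ![(1 - I)/8, (-1 - I)/8, (-1 + I)/8, (1 + I)/8,
        -I/4, 0, I/4, 0, 0, 0, 0, 0, 0, 0, 0, 0] ?_⟩ <;>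
    intro a b d <;> fin_cases a <;> fin_cases b <;> fin_cases d <;>
    simp [Fin.sum_univ_succ, phaseState_apply, phase, Pi.single_apply, funext_iff,
      Fin.forall_fin_succ] <;> ring_nf <;> simp [I_sq] <;> ring_nf
  refine ghz'Perp_le three_ne_zero hu fun g h0 h1 => ?_
  obtain ⟨a, b, c, rfl⟩ : ∃ a b c, g = ![a, b, c] :=
    ⟨g 0, g 1, g 2, by funext i; fin_cases i <;> rfl⟩
  fin_cases a <;> fin_cases b <;> fin_cases c <;>
    first | assumption | exact absurd (by decide) h0 | exact absurd (by decide) h1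

theorem span_iUnion_range_mulVec_Proj3 :
    Submodule.span ℂ (⋃ k, Set.range (Proj3 k).mulVec) = ghz'Perp 3 := by
  simp_rw [Proj3_eq_tensor_qubitProj]
  rw [span_iUnion_range_mulVec_tensor_qubitProj]
  exact le_antisymm span_range_phaseState_le_ghz'Perp ghz'Perp_le_span_range_phaseState

theorem proj3_span_eq_ghz'_perp :
    ((Submodule.span ℂ (⋃ k : Fin 16, Set.range (Proj3 k).mulVec) :
        Submodule ℂ ((Fin 3 → Fin 2) → ℂ)) : Set ((Fin 3 → Fin 2) → ℂ))
      = {w : (Fin 3 → Fin 2) → ℂ | ∑ f, (starRingEnd ℂ) (GHZ' 3 f) * w f = 0} ∧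
    Module.finrank ℂ
      (Submodule.span ℂ (⋃ k : Fin 16, Set.range (Proj3 k).mulVec)) = 7 := by
  rw [span_iUnion_range_mulVec_Proj3]
  refine ⟨rfl, ?_⟩
  have := finrank_ghz'Perp_add_one three_ne_zero
  omega
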